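/- arXiv:1703.06955 — 3 statements merged into one kernel-verified Lean document; each statement's English description precedes it below -/
import Mathlib

section
/- Suppose S(z) = I + S₁/z + S₂/z² + ··· is a matrix power series in 1/z satisfying S(z)S(-z)* = I. Then the numerator S(w)*S(z) - I, expanded in powers of w⁻¹ and z⁻¹, is divisible by (w⁻¹ + z⁻¹), so the generating series W(w,z) := (S(w)*S(z) - I)/(w⁻¹ + z⁻¹) = ∑_{k,l≥0} W_{kl} w⁻ᵏ z⁻ˡ is well-defined, and W(w,z)* = W(z,w). -/
open scoped BigOperators
open Matrix

/-- `S : ℕ → Matrix` are the coefficients of a matrix power series in `z⁻¹`,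
`S(z) = ∑ Sₖ z⁻ᵏ`, with `S(z) = I + O(z⁻¹)` and `S(z) S(-z)* = I`.  The series
`W(w,z) = (S(w)* S(z) - I)/(w⁻¹ + z⁻¹)`, expanded in powers of `w⁻¹` and `z⁻¹`,
is well-defined (the numerator is divisible by `w⁻¹ + z⁻¹`) and satisfies
`W(w,z)* = W(z,w)`. -/
theorem W_series_well_defined (n : ℕ)
    (S : ℕ → Matrix (Fin n) (Fin n) ℂ)
    (hS0 : S 0 = 1)
    (hsymp : ∀ m : ℕ, ∑ p ∈ Finset.range (m + 1),
      ((-1 : ℂ) ^ (m - p)) • (S p * (S (m - p))ᵀ) = if m = 0 then 1 else 0) :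
    ∃ W : ℕ → ℕ → Matrix (Fin n) (Fin n) ℂ,
      (∀ k l, (W k l)ᵀ = W l k) ∧
      (∀ k l, ((S k)ᵀ * S l -
          (if k = 0 ∧ l = 0 then (1 : Matrix (Fin n) (Fin n) ℂ) else 0)) =
        (if hk : k = 0 then 0 else W (k - 1) l) + (if hl : l = 0 then 0 else W k (l - 1))) := by
  classical
  -- Step 1: the reversed inverse identity, via formal power series
  have hBA : ∀ m : ℕ, ∑ p ∈ Finset.range (m + 1),
      ((-1 : ℂ) ^ p) • ((S p)ᵀ * S (m - p)) = if m = 0 then 1 else 0 := by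
    set A : PowerSeries (Matrix (Fin n) (Fin n) ℂ) := PowerSeries.mk S with hA
    set B : PowerSeries (Matrix (Fin n) (Fin n) ℂ) :=
      PowerSeries.mk (fun p => ((-1 : ℂ) ^ p) • (S p)ᵀ) with hB
    have hAB : A * B = 1 := by
      apply PowerSeries.ext
      intro m
      rw [PowerSeries.coeff_mul, Finset.Nat.sum_antidiagonal_eq_sum_range_succ_mk]
      simp only [hA, hB, PowerSeries.coeff_mk, PowerSeries.coeff_one]
      rw [← hsymp m]
      exact Finset.sum_congr rfl fun p _ => by rw [mul_smul_comm]
    have hconst : PowerSeries.constantCoeff A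
        = ((1 : (Matrix (Fin n) (Fin n) ℂ)ˣ) : Matrix (Fin n) (Fin n) ℂ) := by
      simp [hA, hS0]
    have hBeq : B = PowerSeries.invOfUnit A 1 := by
      calc B = 1 * B := (one_mul B).symm
      _ = (PowerSeries.invOfUnit A 1 * A) * B := by rw [PowerSeries.invOfUnit_mul A 1 hconst]
      _ = PowerSeries.invOfUnit A 1 * (A * B) := by rw [mul_assoc]
      _ = PowerSeries.invOfUnit A 1 := by rw [hAB, mul_one]
    have hBA' : B * A = 1 := by rw [hBeq]; exact PowerSeries.invOfUnit_mul A 1 hconst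
    intro m
    have h := congrArg (PowerSeries.coeff m) hBA'
    rw [PowerSeries.coeff_mul, Finset.Nat.sum_antidiagonal_eq_sum_range_succ_mk] at h
    simp only [hA, hB, PowerSeries.coeff_mk, PowerSeries.coeff_one] at h
    rw [← h]
    exact Finset.sum_congr rfl fun p _ => by rw [smul_mul_assoc]
  -- Notation
  set T : ℕ → ℕ → Matrix (Fin n) (Fin n) ℂ := fun k l =>
    (S k)ᵀ * S l - (if k = 0 ∧ l = 0 then 1 else 0) with hT
  set F : ℕ → ℕ → Matrix (Fin n) (Fin n) ℂ := fun m j => ((-1 : ℂ) ^ j) • T j (m - j) with hF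
  -- Step 2: key vanishing identity
  have key : ∀ m : ℕ, ∑ j ∈ Finset.range (m + 1), F m j = 0 := by
    intro m
    have h1 : ∑ j ∈ Finset.range (m + 1),
        ((-1 : ℂ) ^ j) • ((if j = 0 ∧ m - j = 0 then (1 : Matrix (Fin n) (Fin n) ℂ) else 0))
        = if m = 0 then 1 else 0 := by
      rcases Nat.eq_zero_or_pos m with hm | hm
      · subst hm; simp
      · rw [if_neg (Nat.pos_iff_ne_zero.mp hm)]
        apply Finset.sum_eq_zero
        intro j hj
        have : ¬ (j = 0 ∧ m - j = 0) := by rintro ⟨rfl, h2⟩; omega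
        rw [if_neg this, smul_zero]
    simp only [hF, hT, smul_sub]
    rw [Finset.sum_sub_distrib, hBA m, h1, sub_self]
  -- transpose of T
  have hTt : ∀ k l, (T k l)ᵀ = T l k := by
    intro k l
    simp only [hT, transpose_sub, transpose_mul, transpose_transpose]
    congr 1
    by_cases h : k = 0 ∧ l = 0
    · rw [if_pos h, if_pos ⟨h.2, h.1⟩, transpose_one]
    · rw [if_neg h, if_neg (fun h2 => h ⟨h2.2, h2.1⟩), transpose_zero]
  -- reindexing identity
  have hgen : ∀ (G : ℕ → Matrix (Fin n) (Fin n) ℂ) (K L : ℕ),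
      ∑ j ∈ Finset.range (K + L + 2), G j
        = (∑ j ∈ Finset.range (K + 1), G ((K + L + 1) - j))
          + ∑ j ∈ Finset.range (L + 1), G j := by
    intro G K L
    have h1 : ∑ j ∈ Finset.range (K + L + 2), G j
        = ∑ j ∈ Finset.range (K + L + 2), G (K + L + 1 - j) := by
      have h := Finset.sum_range_reflect G (K + L + 2)
      rw [← h]
      exact Finset.sum_congr rfl fun j _ => by norm_num
    rw [h1, Finset.range_eq_Ico,
      ← Finset.sum_Ico_consecutive _ (Nat.zero_le (K + 1)) (by omega : K + 1 ≤ K + L + 2),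
      ← Finset.range_eq_Ico]
    congr 1
    rw [Finset.sum_Ico_eq_sum_range]
    have h2 : K + L + 2 - (K + 1) = L + 1 := by omega
    rw [h2]
    have h3 : ∀ i ∈ Finset.range (L + 1), G (K + L + 1 - (K + 1 + i)) = G (L - i) := by
      intro i _
      have e : K + L + 1 - (K + 1 + i) = L - i := by omega
      rw [e]
    rw [Finset.sum_congr rfl h3]
    rw [← Finset.sum_range_reflect G (L + 1)]
    exact Finset.sum_congr rfl fun j _ => by norm_num
  have hsgn : ∀ j : ℕ, ((-1 : ℂ) ^ j) * ((-1 : ℂ) ^ j) = 1 := by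
    intro j
    rw [← pow_add, ← two_mul, pow_mul]
    norm_num
  -- the W
  set Wf : ℕ → ℕ → Matrix (Fin n) (Fin n) ℂ := fun k l =>
    ((-1 : ℂ) ^ k) • ∑ j ∈ Finset.range (k + 1), F (k + l + 1) j with hWf
  refine ⟨Wf, ?_, ?_⟩
  · -- symmetry
    intro k l
    have hFt : ∀ j ∈ Finset.range (k + 1), (F (k + l + 1) j)ᵀ
        = ((-1 : ℂ) ^ (k + l + 1)) • F (k + l + 1) ((k + l + 1) - j) := by
      intro j hj
      have hjm : j ≤ k + l + 1 := by simp only [Finset.mem_range] at hj; omega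
      simp only [hF, transpose_smul, hTt]
      rw [smul_smul]
      have hsub : (k + l + 1) - ((k + l + 1) - j) = j := by omega
      rw [hsub]
      congr 1
      have hpm : (-1 : ℂ) ^ ((k + l + 1) - j) * (-1 : ℂ) ^ j = (-1 : ℂ) ^ (k + l + 1) := by
        rw [← pow_add]; congr 1; omega
      linear_combination ((-1 : ℂ) ^ ((k + l + 1) - j)) * hpm
        - ((-1 : ℂ) ^ j) * hsgn ((k + l + 1) - j)
    simp only [hWf]
    rw [transpose_smul, transpose_sum, Finset.sum_congr rfl hFt, ← Finset.smul_sum, smul_smul]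
    have hsum : ∑ j ∈ Finset.range (k + 1), F (k + l + 1) ((k + l + 1) - j)
        = - ∑ j ∈ Finset.range (l + 1), F (k + l + 1) j := by
      have h0 := key (k + l + 1)
      rw [show k + l + 1 + 1 = k + l + 2 by ring] at h0
      have h1 := hgen (F (k + l + 1)) k l
      rw [h0] at h1
      exact eq_neg_of_add_eq_zero_left h1.symm
    rw [hsum, smul_neg, ← neg_smul]
    have hmm : (-((-1 : ℂ) ^ k * (-1 : ℂ) ^ (k + l + 1))) = (-1 : ℂ) ^ l := by
      have h : (-1 : ℂ) ^ (k + l + 1) = (-1 : ℂ) ^ k * (-1 : ℂ) ^ l * (-1) := by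
        rw [pow_add, pow_add, pow_one]
      rw [h]
      linear_combination (-1 : ℂ) ^ l * hsgn k
    rw [hmm, show l + k + 1 = k + l + 1 by ring]
  · -- recurrence
    intro k l
    match k, l with
    | 0, 0 =>
      rw [dif_pos rfl, add_zero, if_pos ⟨rfl, rfl⟩, hS0, transpose_one,
        one_mul, sub_self]
    | 0, l + 1 =>
      rw [dif_pos rfl, dif_neg (Nat.succ_ne_zero l), zero_add, Nat.add_sub_cancel]
      simp only [hWf]
      simp only [hF, hT]
      simp
    | k + 1, 0 =>
      rw [dif_neg (Nat.succ_ne_zero k), dif_pos rfl, add_zero, Nat.add_sub_cancel]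
      simp only [hWf]
      have h0 := key (k + 1)
      rw [Finset.sum_range_succ] at h0
      have h1 : ∑ j ∈ Finset.range (k + 1), F (k + 1) j = - F (k + 1) (k + 1) :=
        eq_neg_of_add_eq_zero_left h0
      rw [show k + 0 + 1 = k + 1 by ring, h1]
      simp only [hF, Nat.sub_self, hT]
      have hc : ¬ (k + 1 = 0 ∧ True) := by simp
      rw [if_neg hc, sub_zero, smul_neg, smul_smul, ← pow_add,
        show k + (k + 1) = 2 * k + 1 by ring, pow_succ, pow_mul]
      norm_num
    | k + 1, l + 1 =>
      rw [dif_neg (Nat.succ_ne_zero k), dif_neg (Nat.succ_ne_zero l),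
        Nat.add_sub_cancel, Nat.add_sub_cancel]
      simp only [hWf]
      have hc : ¬ (k + 1 = 0 ∧ l + 1 = 0) := by simp
      rw [if_neg hc]
      rw [show k + (l + 1) + 1 = k + l + 2 by ring, show k + 1 + l + 1 = k + l + 2 by ring]
      have hs : ∑ j ∈ Finset.range (k + 1 + 1), F (k + l + 2) j
          = ∑ j ∈ Finset.range (k + 1), F (k + l + 2) j + F (k + l + 2) (k + 1) :=
        Finset.sum_range_succ _ _
      rw [hs, smul_add, ← add_assoc]
      have h1 : ((-1 : ℂ) ^ k) • ∑ j ∈ Finset.range (k + 1), F (k + l + 2) j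
          + ((-1 : ℂ) ^ (k + 1)) • ∑ j ∈ Finset.range (k + 1), F (k + l + 2) j = 0 := by
        rw [← add_smul, pow_succ]
        simp [mul_comm]
      rw [h1, zero_add]
      simp only [hF]
      rw [show k + l + 2 - (k + 1) = l + 1 by omega, smul_smul, ← pow_add,
        show k + 1 + (k + 1) = 2 * (k + 1) by ring, pow_mul]
      norm_num
      simp only [hT]
      rw [if_neg hc, sub_zero]
end

section
/- Define formal power series inductively: given a power series F(x,z⁻¹) = ∑_{q≥0} f_q(x) z^{−q} with f_0(0) ≠ 0 (f_q formal power series in x), the Birkhoff factorization operator M F := z·(d/dx)(F/f_0) produces a series of the same shape. Claim: if F = I^{LG,λ}(t,z)/z with I^{LG,λ}(t,z) = z∑_{a≥0}(t^a/(z^a a!))∏_{0<k<(a+1)/5, ⟨k⟩=⟨(a+1)/5⟩}((kz)⁵+λ⁵)φ_a (components indexed by a mod 5), then the φ_0 components I^{LG}_{p,p} for p = 0,...,4 satisfy I_{0,0}·I_{1,1}·I_{2,2}·I_{3,3}·I_{4,4} = (1 − (t/5)⁵)⁻¹ when λ = 0. -/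
open scoped BigOperators
open PowerSeries

/-- The `q`-th component of the (untwisted, extended) LG `I`-function of the quintic
at `λ = 0`, `z = 1`:  `I_q(t) = ∑_{a ≡ q mod 5} (t^a / a!) ∏ k⁵`, where `k` ranges over
`0 < k < (a+1)/5` with `⟨k⟩ = ⟨(a+1)/5⟩`; writing `a = 5n + r` the product is
`∏_{m=0}^{n-1} ((5m + r + 1)/5)⁵`. -/
noncomputable def lgI (q : ℕ) : PowerSeries ℚ :=
  PowerSeries.mk fun a =>
    if a % 5 = q then
      (∏ m ∈ Finset.range (a / 5), (((5 * m + a % 5 + 1 : ℕ) : ℚ) / 5) ^ 5) /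
        (a.factorial : ℚ)
    else 0

/-- The Birkhoff-factorization series `I_{p,q}`: `I_{0,q} = I_q` and
`I_{p,q} = d/dt (I_{p-1,q} / I_{p-1,p-1})`. -/
noncomputable def lgIpq : ℕ → ℕ → PowerSeries ℚ
  | 0, q => lgI q
  | p + 1, q => (lgIpq p q * (lgIpq p p)⁻¹).derivativeFun

/-!
The diagonal series are the successive pivots of a reduction of the order-4 operator
`N = D⁴ - 5⁻⁵ t (D ∘ t)⁴`, whose leading coefficient is `1 - (t/5)⁵` and which satisfies
`N I_q = 0` for `q < 4` and `N I_4 = 1`. If an operator `L` of order `n + 1` kills `y₀`, then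
`L (y₀ g) = M (D g)` for an operator `M` of order `n` whose leading coefficient is that of `L`
times `y₀`. Reducing successively by `I_{0,0}, …, I_{3,3}` therefore turns `N` into multiplication
by `(1 - (t/5)⁵) I_{0,0} ⋯ I_{3,3}`, and this sends `I_{4,4}` to `N I_4 = 1` (Abel's identity for the
Wronskian in disguise). The pivots are invertible because `I_{p,p+d} ≡ t^d/d! mod t^(5-p)`.
-/

open Finset
open scoped Nat

section DiffOp

variable {R A : Type*} [CommSemiring R] [CommRing A] [Algebra R A] (D : Derivation R A A)

/-- `IsDiffOp D n a L`: the map `L` is a linear differential operator `∑_{k ≤ n} a_k D^k` with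
`a_n = a`, presented in the nested form `L = a₀ + L' ∘ D` with `L'` of order `n - 1`. -/
def IsDiffOp : ℕ → A → (A → A) → Prop
  | 0, a, L => ∀ y, L y = a * y
  | n + 1, a, L => ∃ b L', IsDiffOp n a L' ∧ ∀ y, L y = b * y + L' (D y)

variable {D}

namespace IsDiffOp

theorem map_add : ∀ {n : ℕ} {a : A} {L : A → A}, IsDiffOp D n a L → ∀ f g, L (f + g) = L f + L g
  | 0, _, _, h, f, g => by rw [h, h, h, mul_add]
  | _ + 1, _, _, ⟨_, _, h', h⟩, f, g => by rw [h, h, h, D.map_add, h'.map_add]; ring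

theorem succ_zero : ∀ {n : ℕ} {a : A} {L : A → A}, IsDiffOp D n a L → IsDiffOp D (n + 1) 0 L
  | 0, a, _, h => ⟨a, fun _ => 0, fun _ => (zero_mul _).symm, fun y => by rw [h, add_zero]⟩
  | _ + 1, _, _, ⟨b, L', h', h⟩ => ⟨b, L', h'.succ_zero, h⟩

theorem add : ∀ {n : ℕ} {a a' : A} {L L' : A → A}, IsDiffOp D n a L → IsDiffOp D n a' L' →
    IsDiffOp D n (a + a') (fun y => L y + L' y)
  | 0, _, _, _, _, h, h' => fun y => by dsimp only; rw [h, h', add_mul]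
  | _ + 1, _, _, _, _, ⟨b, M, hM, h⟩, ⟨b', M', hM', h'⟩ =>
    ⟨b + b', fun y => M y + M' y, hM.add hM', fun y => by dsimp only; rw [h, h']; ring⟩

theorem mul_left (c : A) : ∀ {n : ℕ} {a : A} {L : A → A}, IsDiffOp D n a L →
    IsDiffOp D n (c * a) (fun y => c * L y)
  | 0, _, _, h => fun y => by dsimp only; rw [h, mul_assoc]
  | _ + 1, _, _, ⟨b, M, hM, h⟩ =>
    ⟨c * b, fun y => c * M y, hM.mul_left c, fun y => by dsimp only; rw [h]; ring⟩

theorem mul_add {n : ℕ} {a : A} {L : A → A} (c : A) (h : IsDiffOp D (n + 1) a L) :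
    IsDiffOp D (n + 1) a (fun y => c * y + L y) :=
  let ⟨b, M, hM, hL⟩ := h
  ⟨c + b, M, hM, fun y => by dsimp only; rw [hL]; ring⟩

theorem exists_map_mul : ∀ {n : ℕ} {a : A} {L : A → A}, IsDiffOp D (n + 1) a L → ∀ y₀,
    ∃ M, IsDiffOp D n (a * y₀) M ∧ ∀ g, L (y₀ * g) = L y₀ * g + M (D g)
  | 0, a, _, ⟨b, _, h', h⟩, y₀ => ⟨fun g => a * y₀ * g, fun _ => rfl, fun g => by
      rw [h, h, h', h', D.leibniz, smul_eq_mul, smul_eq_mul]; ring⟩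
  | n + 1, a, _, ⟨b, L', h', h⟩, y₀ => by
    obtain ⟨M₁, hM₁, hL₁⟩ := h'.exists_map_mul y₀
    obtain ⟨M₂, hM₂, hL₂⟩ := h'.exists_map_mul (D y₀)
    refine ⟨fun g => L' y₀ * g + M₁ (D g) + M₂ g, ?_, fun g => ?_⟩
    · have hM : IsDiffOp D (n + 1) (a * y₀) (fun g => L' y₀ * g + M₁ (D g)) :=
        ⟨L' y₀, M₁, hM₁, fun _ => rfl⟩
      simpa using hM.add hM₂.succ_zero
    · rw [h, h, D.leibniz, smul_eq_mul, smul_eq_mul, h'.map_add, mul_comm g, hL₁, hL₂]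
      ring

theorem exists_diag_reduction {Y : ℕ → ℕ → A} {w : ℕ → A}
    (hY : ∀ p q, Y (p + 1) q = D (Y p q * w p)) :
    ∀ {p m : ℕ} {a : A} {L : A → A}, IsDiffOp D (m + p) a L → (∀ q < p, L (Y 0 q) = 0) →
      (∀ i < p, Y i i * w i = 1) →
      ∃ M, IsDiffOp D m (a * ∏ i ∈ range p, Y i i) M ∧ ∀ q, M (Y p q) = L (Y 0 q)
  | 0, _, _, L, hL, _, _ => ⟨L, by simpa using hL, fun _ => rfl⟩
  | p + 1, m, a, L, hL, hsol, hw => by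
    rw [show m + (p + 1) = m + 1 + p by omega] at hL
    obtain ⟨M, hM, hMY⟩ := exists_diag_reduction hY hL (fun q hq => hsol q (by omega))
      (fun i hi => hw i (by omega))
    obtain ⟨M', hM', hred⟩ := hM.exists_map_mul (Y p p)
    refine ⟨M', by rwa [prod_range_succ, ← mul_assoc], fun q => ?_⟩
    have hcancel : Y p p * (Y p q * w p) = Y p q := by
      rw [mul_left_comm, hw p (by omega), mul_one]
    calc M' (Y (p + 1) q) = M (Y p p) * (Y p q * w p) + M' (D (Y p q * w p)) := by
          rw [hY, hMY, hsol p (by omega), zero_mul, zero_add]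
      _ = L (Y 0 q) := by rw [← hred, hcancel, hMY]

theorem mul_prod_diag_eq {Y : ℕ → ℕ → A} {w : ℕ → A} {n : ℕ} {a : A} {L : A → A}
    (hY : ∀ p q, Y (p + 1) q = D (Y p q * w p)) (hw : ∀ p < n, Y p p * w p = 1)
    (hL : IsDiffOp D n a L) (hsol : ∀ q < n, L (Y 0 q) = 0) :
    a * ∏ p ∈ range (n + 1), Y p p = L (Y 0 n) := by
  rw [← zero_add n] at hL
  obtain ⟨M, hM, hMY⟩ := exists_diag_reduction hY hL hsol hw
  rw [← hMY, hM, prod_range_succ, mul_assoc]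

end IsDiffOp

variable (D) in
theorem isDiffOp_iterate (k : ℕ) : IsDiffOp D k 1 (⇑D)^[k] := by
  induction k with
  | zero => exact fun y => (one_mul y).symm
  | succ k ih => exact ⟨0, _, ih, fun y => by rw [Function.iterate_succ_apply, zero_mul, zero_add]⟩

/-- The general `k` is needed for the induction: `D ∘ (k + x D) = (k + 1 + x D) ∘ D`. -/
theorem IsDiffOp.comp_natCast_add_mul {x : A} (hx : D x = 1) :
    ∀ {n : ℕ} {a : A} {L : A → A} (k : ℕ), IsDiffOp D n a L →
      IsDiffOp D (n + 1) (a * x) (fun y => L (k * y + x * D y))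
  | 0, a, _, k, h => ⟨a * k, fun z => a * x * z, fun _ => rfl, fun y => by
      dsimp only; rw [h]; ring⟩
  | _ + 1, a, _, k, ⟨b, L', h', h⟩ => by
    refine ⟨b * k, _, (h'.comp_natCast_add_mul hx (k + 1)).mul_add (b * x), fun y => ?_⟩
    have hD : D (k * y + x * D y) = ((k + 1 : ℕ) : A) * D y + x * D (D y) := by
      rw [D.map_add, D.leibniz, D.leibniz, D.map_natCast, hx]
      push_cast
      simp only [smul_eq_mul]
      ring
    dsimp only
    rw [h, hD]
    ring

theorem isDiffOp_iterate_derivation_mul {x : A} (hx : D x = 1) (k : ℕ) :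
    IsDiffOp D k (x ^ k) (fun y => D (x * y))^[k] := by
  induction k with
  | zero => exact fun y => by simp
  | succ k ih =>
    have hT : ∀ y, D (x * y) = ((1 : ℕ) : A) * y + x * D y := fun y => by
      rw [D.leibniz, hx, smul_eq_mul, smul_eq_mul]; push_cast; ring
    rw [pow_succ]
    convert ih.comp_natCast_add_mul hx 1 using 2 with y
    rw [Function.iterate_succ_apply, hT]

end DiffOp

section PowerSeriesLemmas

variable {R : Type*} [CommSemiring R]

theorem coeff_iterate_derivative_X_mul (f : R⟦X⟧) (k n : ℕ) :
    coeff n ((fun g => d⁄dX R (X * g))^[k] f) = (n + 1) ^ k * coeff n f := by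
  induction k with
  | zero => simp
  | succ k ih =>
    rw [Function.iterate_succ_apply', coeff_derivative, coeff_succ_X_mul, ih]
    ring

theorem X_pow_dvd_derivative {f : R⟦X⟧} {m : ℕ} (h : X ^ (m + 1) ∣ f) : X ^ m ∣ d⁄dX R f := by
  rw [X_pow_dvd_iff] at h ⊢
  intro j hj
  rw [coeff_derivative, h (j + 1) (by omega), zero_mul]

variable {k : Type*} [Field k]

theorem X_pow_dvd_inv_sub_one {f : k⟦X⟧} {m : ℕ} (h : X ^ m ∣ f - 1) : X ^ m ∣ f⁻¹ - 1 := by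
  rcases m with _ | m
  · simp
  have hf : constantCoeff f = 1 := by
    have := X_dvd_iff.1 ((dvd_pow_self X m.succ_ne_zero).trans h)
    rwa [map_sub, map_one, sub_eq_zero] at this
  have : f⁻¹ - 1 = -(f⁻¹ * (f - 1)) := by
    rw [mul_sub, PowerSeries.inv_mul_cancel _ (by simp [hf])]
    ring
  rw [this]
  exact (dvd_mul_of_dvd_right h _).neg_right

theorem derivative_C_inv_factorial_mul_X_pow [CharZero k] (d : ℕ) :
    d⁄dX k (C ((d + 1)! : k)⁻¹ * X ^ (d + 1)) = C (d ! : k)⁻¹ * X ^ d := by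
  rw [Derivation.leibniz, derivative_pow, derivative_C, derivative_X, smul_eq_mul, smul_eq_mul,
    mul_zero, add_zero, Nat.add_sub_cancel, mul_one, ← mul_assoc, ← map_natCast (C (R := k)),
    ← map_mul, Nat.factorial_succ]
  congr 2
  push_cast
  field_simp

end PowerSeriesLemmas

section Quintic

theorem lgI_coeff_add_five (q m : ℕ) :
    ((m + 1 + 1).ascFactorial 4 : ℚ) * coeff (m + 1 + 4) (lgI q) =
      1 / 5 ^ 5 * (m + 1) ^ 4 * coeff m (lgI q) := by
  simp only [lgI, coeff_mk, show m + 1 + 4 = m + 5 by omega, Nat.add_mod_right]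
  split_ifs with hq
  · rw [show (m + 5) / 5 = m / 5 + 1 by omega, prod_range_succ,
      show 5 * (m / 5) + m % 5 = m from Nat.div_add_mod m 5,
      ← Nat.factorial_mul_ascFactorial m 5]
    simp only [Nat.ascFactorial_succ, Nat.ascFactorial_zero]
    push_cast
    field_simp
    ring
  · simp

/-- `d/dt` of this operator is `D⁵ - 5⁻⁵ (D ∘ t)⁵`, which annihilates every `I_q`. -/
noncomputable def quinticOp (y : ℚ⟦X⟧) : ℚ⟦X⟧ :=
  (d⁄dX ℚ)^[4] y - C (1 / 5 ^ 5 : ℚ) * X * (fun f => d⁄dX ℚ (X * f))^[4] y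

theorem isDiffOp_quinticOp : IsDiffOp (d⁄dX ℚ) 4 (1 - C (1 / 5 ^ 5 : ℚ) * X ^ 5) quinticOp := by
  have h := (isDiffOp_iterate (d⁄dX ℚ) 4).add
    ((isDiffOp_iterate_derivation_mul (derivative_X (R := ℚ)) 4).mul_left
      (-(C (1 / 5 ^ 5 : ℚ) * X)))
  convert h using 1
  · ring
  · funext y
    rw [quinticOp, sub_eq_add_neg, neg_mul]

theorem quinticOp_lgI (q : ℕ) : quinticOp (lgI q) = if q = 4 then 1 else 0 := by
  ext n
  rcases n with _ | m
  · rw [quinticOp, map_sub, mul_assoc, coeff_C_mul, coeff_zero_X_mul, mul_zero, sub_zero,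
      coeff_zero_eq_constantCoeff, constantCoeff_iterate_derivative]
    norm_num [lgI, eq_comm, Nat.factorial]
  · rw [quinticOp, map_sub, mul_assoc, coeff_C_mul, coeff_succ_X_mul, coeff_iterate_derivative,
      coeff_iterate_derivative_X_mul, lgI_coeff_add_five, ← mul_assoc, sub_self]
    split_ifs <;> simp

end Quintic

section Birkhoff

theorem lgIpq_succ (p q : ℕ) : lgIpq (p + 1) q = d⁄dX ℚ (lgIpq p q * (lgIpq p p)⁻¹) := rfl

theorem X_pow_dvd_lgIpq_sub : ∀ {p d : ℕ}, p + d ≤ 4 →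
    X ^ (5 - p) ∣ lgIpq p (p + d) - C (d ! : ℚ)⁻¹ * X ^ d
  | 0, d, _ => by
    rw [X_pow_dvd_iff]
    intro m hm
    rw [zero_add, lgIpq, lgI, map_sub, coeff_mk, coeff_C_mul_X_pow, Nat.mod_eq_of_lt hm,
      Nat.div_eq_of_lt hm]
    split_ifs <;> simp_all
  | p + 1, d, hd => by
    have hu := X_pow_dvd_inv_sub_one
      (by simpa using X_pow_dvd_lgIpq_sub (p := p) (d := 0) (by omega))
    have hv := X_pow_dvd_lgIpq_sub (p := p) (d := d + 1) (by omega)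
    rw [show 5 - p = 5 - (p + 1) + 1 by omega] at hu hv
    rw [show p + 1 + d = p + (d + 1) by omega, lgIpq_succ, ← derivative_C_inv_factorial_mul_X_pow,
      ← map_sub]
    apply X_pow_dvd_derivative
    rw [show ∀ u v e : ℚ⟦X⟧, v * u⁻¹ - e = (v - e) * u⁻¹ + e * (u⁻¹ - 1) from fun _ _ _ => by ring]
    exact dvd_add (dvd_mul_of_dvd_left hv _) (dvd_mul_of_dvd_right hu _)

theorem constantCoeff_lgIpq_self {p : ℕ} (hp : p ≤ 4) : constantCoeff (lgIpq p p) = 1 := by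
  have h := X_pow_dvd_lgIpq_sub (p := p) (d := 0) (by omega)
  have := X_dvd_iff.1 ((dvd_pow_self X (by omega : 5 - p ≠ 0)).trans h)
  simpa [sub_eq_zero] using this

end Birkhoff

theorem lg_diagonal_product :
    lgIpq 0 0 * lgIpq 1 1 * lgIpq 2 2 * lgIpq 3 3 * lgIpq 4 4 =
      (1 - PowerSeries.C (R := ℚ) (1 / 5 ^ 5) * PowerSeries.X ^ 5)⁻¹ := by
  have hsol : ∀ q < 4, quinticOp (lgIpq 0 q) = 0 := fun q hq => by
    rw [lgIpq, quinticOp_lgI, if_neg hq.ne]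
  have hw : ∀ p < 4, lgIpq p p * (lgIpq p p)⁻¹ = 1 := fun p hp =>
    PowerSeries.mul_inv_cancel _ (by rw [constantCoeff_lgIpq_self hp.le]; exact one_ne_zero)
  have h := isDiffOp_quinticOp.mul_prod_diag_eq lgIpq_succ hw hsol
  rw [lgIpq, quinticOp_lgI, if_pos rfl] at h
  rw [PowerSeries.eq_inv_iff_mul_eq_one (by simp), mul_comm]
  simpa only [prod_range_succ, prod_range_zero, one_mul] using h
end

section
/- Let ξ = exp(2πi/5). Then the three quantities b₀₁ := ξ/(1+ξ)·Γ⁵(4/5)/Γ⁵(3/5), b₁₂ := ξ(1+ξ)³/(1+ξ+ξ²)²·Γ⁵(3/5)/Γ⁵(2/5), b₂₃ := ξ(1+ξ+ξ²)(1-ξ³)³/(1-ξ⁴)³·Γ⁵(2/5)/Γ⁵(1/5) satisfy b₂₃ = b₀₁, and hence b₀₁ + b₁₂ + b₂₃ = 2b₀₁ + b₁₂. -/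
/-!
Reflection gives `Γ(x)Γ(1-x) = π / sin(πx)`, and `sin(2πx) = 2 sin(πx) cos(πx)`, so at `x = 2/5`
`Γ(2/5)Γ(3/5) = 2cos(2π/5) · Γ(1/5)Γ(4/5)` with `2cos(2π/5) = ξ + ξ⁴`. Substituting this into `b₂₃`
leaves an identity between polynomials in `ξ` that holds modulo `ξ⁵ - 1`.
-/

open Complex
open scoped Real

theorem Complex.Gamma_mul_Gamma_one_sub_eq_two_cos_mul (z : ℂ) (hz : cos (π * z) ≠ 0) :
    Gamma z * Gamma (1 - z) = 2 * cos (π * z) * (Gamma (2 * z) * Gamma (1 - 2 * z)) := by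
  rw [Gamma_mul_Gamma_one_sub, Gamma_mul_Gamma_one_sub,
    show (π : ℂ) * (2 * z) = 2 * (π * z) by ring, sin_two_mul]
  by_cases hs : sin (π * z) = 0
  · simp [hs]
  · field_simp

theorem Complex.two_cos_eq_exp_add_inv (z : ℂ) : 2 * cos z = exp (z * I) + (exp (z * I))⁻¹ := by
  rw [two_cos, ← exp_neg, neg_mul]

theorem add_pow_four_pow_five_mul_eq_of_pow_five_eq_one {R : Type*} [CommRing R] {ζ : R}
    (h : ζ ^ 5 = 1) :
    (ζ + ζ ^ 4) ^ 5 * ((1 + ζ) * (1 + ζ + ζ ^ 2) * (1 - ζ ^ 3) ^ 3) = (1 - ζ ^ 4) ^ 3 := by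
  grind

theorem Gamma_two_fifths_mul_Gamma_three_fifths {ξ : ℂ} (hξ : ξ = exp (2 * π * I / 5)) :
    Gamma (2 / 5) * Gamma (3 / 5) = (ξ + ξ ^ 4) * (Gamma (1 / 5) * Gamma (4 / 5)) := by
  have hξ5 : ξ ^ 5 = 1 :=
    (hξ ▸ isPrimitiveRoot_exp 5 (by norm_num) : IsPrimitiveRoot ξ 5).pow_eq_one
  have hcos : 2 * cos (π * (2 / 5)) = ξ + ξ ^ 4 := by
    rw [two_cos_eq_exp_add_inv, show π * (2 / 5) * I = 2 * π * I / 5 by ring, ← hξ,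
      inv_eq_of_mul_eq_one_right (a := ξ) (by rw [← pow_succ', hξ5])]
  have hcos_pos : 0 < Real.cos (π * (2 / 5)) :=
    Real.cos_pos_of_mem_Ioo ⟨by linarith [Real.pi_pos], by linarith [Real.pi_pos]⟩
  have hcos_ne : cos (π * (2 / 5)) ≠ 0 := by
    rw [show (π : ℂ) * (2 / 5) = ((π * (2 / 5) : ℝ) : ℂ) by push_cast; ring, ← ofReal_cos]
    exact_mod_cast hcos_pos.ne'
  have h := Gamma_mul_Gamma_one_sub_eq_two_cos_mul (2 / 5) hcos_ne
  norm_num at h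
  rw [h, hcos, mul_comm (Gamma (4 / 5))]

theorem U_plus_entries_identity_general
    (ξ : ℂ) (hξ : ξ = Complex.exp (2 * Real.pi * Complex.I / 5))
    (b01 b12 b23 : ℂ)
    (h01 : b01 = ξ / (1 + ξ) * (Complex.Gamma (4 / 5) ^ 5 / Complex.Gamma (3 / 5) ^ 5))
    (h23 : b23 = ξ * (1 + ξ + ξ ^ 2) * (1 - ξ ^ 3) ^ 3 / (1 - ξ ^ 4) ^ 3 *
      (Complex.Gamma (2 / 5) ^ 5 / Complex.Gamma (1 / 5) ^ 5)) :
    b23 = b01 ∧ b01 + b12 + b23 = 2 * b01 + b12 := by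
  have hprim : IsPrimitiveRoot ξ 5 := hξ ▸ isPrimitiveRoot_exp 5 (by norm_num)
  have hcyc := add_pow_four_pow_five_mul_eq_of_pow_five_eq_one hprim.pow_eq_one
  have h4 : 1 - ξ ^ 4 ≠ 0 :=
    sub_ne_zero.mpr (hprim.pow_ne_one_of_pos_of_lt (by norm_num) (by norm_num)).symm
  have h1 : 1 + ξ ≠ 0 := by
    intro h; apply pow_ne_zero 3 h4; rw [← hcyc, h]; ring
  have hΓ := congrArg (· ^ 5) (Gamma_two_fifths_mul_Gamma_three_fifths hξ)
  have hΓ1 : Gamma (1 / 5) ≠ 0 := Gamma_ne_zero_of_re_pos (by norm_num)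
  have hΓ3 : Gamma (3 / 5) ≠ 0 := Gamma_ne_zero_of_re_pos (by norm_num)
  have h23_eq_01 : b23 = b01 := by
    rw [h23, h01, div_mul_div_comm, div_mul_div_comm,
      div_eq_div_iff (mul_ne_zero (pow_ne_zero 3 h4) (pow_ne_zero 5 hΓ1))
        (mul_ne_zero h1 (pow_ne_zero 5 hΓ3))]
    linear_combination ξ * (1 + ξ) * (1 + ξ + ξ ^ 2) * (1 - ξ ^ 3) ^ 3 * hΓ
      + ξ * (Gamma (1 / 5) * Gamma (4 / 5)) ^ 5 * hcyc
  exact ⟨h23_eq_01, by rw [h23_eq_01]; ring⟩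

theorem U_plus_entries_identity
    (ξ : ℂ) (hξ : ξ = Complex.exp (2 * Real.pi * Complex.I / 5))
    (b01 b12 b23 : ℂ)
    (h01 : b01 = ξ / (1 + ξ) * (Complex.Gamma (4 / 5) ^ 5 / Complex.Gamma (3 / 5) ^ 5))
    (h12 : b12 = ξ * (1 + ξ) ^ 3 / (1 + ξ + ξ ^ 2) ^ 2 *
      (Complex.Gamma (3 / 5) ^ 5 / Complex.Gamma (2 / 5) ^ 5))
    (h23 : b23 = ξ * (1 + ξ + ξ ^ 2) * (1 - ξ ^ 3) ^ 3 / (1 - ξ ^ 4) ^ 3 *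
      (Complex.Gamma (2 / 5) ^ 5 / Complex.Gamma (1 / 5) ^ 5)) :
    b23 = b01 ∧ b01 + b12 + b23 = 2 * b01 + b12 :=
  U_plus_entries_identity_general ξ hξ b01 b12 b23 h01 h23
end
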